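/- arXiv:1205.0401 — 5 statements merged into one kernel-verified Lean document; each statement's English description precedes it below -/
import Mathlib

section
/- For every v > 0 and every n ∈ ℕ, SAB_{n,v} ⊆ SAB^{⌈2/v⌉}_{n,v,v/2}; that is, every bridge γ of length n with y(γ_n) ≥ vn has at least (v/2)n values of h ∈ ℤ for which 1 ≤ |V_{h,h+1}(γ)| ≤ ⌈2/v⌉. -/
open scoped BigOperators ENNReal
open Filter MeasureTheory

namespace SAWpaper

/-- Points of `ℤ^d`. -/
abbrev V (d : ℕ) := Fin d → ℤ

/-- The first coordinate `x(u)` (for `d ≥ 1`). -/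
def xcoord {d : ℕ} (u : V d) : ℤ := if h : 0 < d then u ⟨0, h⟩ else 0

/-- The second coordinate `y(u)` (for `d ≥ 2`). -/
def ycoord {d : ℕ} (u : V d) : ℤ := if h : 1 < d then u ⟨1, h⟩ else 0

/-- Euclidean norm of a point of `ℤ^d`. -/
noncomputable def eucNorm {d : ℕ} (u : V d) : ℝ := Real.sqrt (∑ i, ((u i : ℝ)) ^ 2)

/-- Nearest-neighbour adjacency in `ℤ^d`. -/
def adj {d : ℕ} (u v : V d) : Prop := (∑ i, (u i - v i).natAbs) = 1

/-- `γ`, viewed as a function `ℕ → ℤ^d` frozen after time `n`, is a walk of length `n`. -/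
def IsWalk {d : ℕ} (n : ℕ) (γ : ℕ → V d) : Prop :=
  (∀ i, i < n → adj (γ i) (γ (i + 1))) ∧ ∀ i, n ≤ i → γ i = γ n

/-- A self-avoiding walk of length `n` (injective on `{0,…,n}`). -/
def IsSAW {d : ℕ} (n : ℕ) (γ : ℕ → V d) : Prop :=
  IsWalk n γ ∧ ∀ i, i ≤ n → ∀ j, j ≤ n → γ i = γ j → i = j

/-- `SAW_n`: self-avoiding walks of length `n` started at `0`. -/
def SAWset (d n : ℕ) : Set (ℕ → V d) := {γ | γ 0 = 0 ∧ IsSAW n γ}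

/-- A bridge: a self-avoiding walk whose first point uniquely minimizes the `y`-coordinate and
whose final point maximizes it. -/
def IsBridge {d : ℕ} (n : ℕ) (γ : ℕ → V d) : Prop :=
  IsSAW n γ ∧ (∀ i, 0 < i → i ≤ n → ycoord (γ 0) < ycoord (γ i)) ∧
    ∀ i, i ≤ n → ycoord (γ i) ≤ ycoord (γ n)

/-- `SAB_n`: bridges of length `n` started at `0`. -/
def SABset (d n : ℕ) : Set (ℕ → V d) := {γ | γ 0 = 0 ∧ IsBridge n γ}

/-- The uniform probability of an event `A` under `P_SAW_n`. -/
noncomputable def PSAW (d n : ℕ) (A : Set (ℕ → V d)) : ℝ :=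
  (Set.ncard (SAWset d n ∩ A) : ℝ) / (Set.ncard (SAWset d n) : ℝ)

/-- The uniform probability of an event `A` under `P_SAB_n`. -/
noncomputable def PSAB (d n : ℕ) (A : Set (ℕ → V d)) : ℝ :=
  (Set.ncard (SABset d n ∩ A) : ℝ) / (Set.ncard (SABset d n) : ℝ)

/-- `i` is a renewal index of the bridge `γ` of length `n`:
both `γ_{[0,i]}` and `γ_{[i,n]}` are bridges. -/
def IsRenewalIdx {d : ℕ} (n : ℕ) (γ : ℕ → V d) (i : ℕ) : Prop :=
  i ≤ n ∧ (∀ j, 0 < j → j ≤ i → ycoord (γ 0) < ycoord (γ j)) ∧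
    (∀ j, j ≤ i → ycoord (γ j) ≤ ycoord (γ i)) ∧
    (∀ j, i < j → j ≤ n → ycoord (γ i) < ycoord (γ j)) ∧
    ∀ j, i ≤ j → j ≤ n → ycoord (γ j) ≤ ycoord (γ n)

/-- `R_γ`: the set of renewal points of a bridge of length `n`. -/
def renewalPts (d n : ℕ) (γ : ℕ → V d) : Set (V d) :=
  {p | ∃ i, IsRenewalIdx n γ i ∧ γ i = p}

/-- Length of a frozen walk: the first time after which the walk is constant. -/
noncomputable def len {d : ℕ} (γ : ℕ → V d) : ℕ := sInf {N | ∀ i, N ≤ i → γ i = γ N}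

/-- An irreducible bridge of length `n ≥ 1`: no interior renewal index. -/
def IsIrreducible {d : ℕ} (n : ℕ) (γ : ℕ → V d) : Prop :=
  1 ≤ n ∧ IsBridge n γ ∧ ∀ k, 0 < k → k < n → ¬IsRenewalIdx n γ k

/-- `iSAB`: irreducible bridges of arbitrary (positive) length started at `0`. -/
def iSAB (d : ℕ) : Set (ℕ → V d) := {γ | γ 0 = 0 ∧ IsIrreducible (len γ) γ}

/-- `μc` is the connective constant: `|SAW_n|^{1/n} → μc`. -/
def ConnectiveConst (d : ℕ) (μc : ℝ) : Prop :=
  Tendsto (fun n : ℕ => (Set.ncard (SAWset d n) : ℝ) ^ ((n : ℝ)⁻¹)) atTop (nhds μc)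

/-- The ballistic assumption: for some `v > 0`,
`limsup n⁻¹ log P_SAB_n(y(γ_n) ≥ v n) = 0`, i.e. since the quantity is `≤ 0`, for every
`ε > 0` the probability is frequently at least `exp(-ε n)`. -/
def BallisticAssumption (d : ℕ) : Prop :=
  ∃ v : ℝ, 0 < v ∧ ∀ ε : ℝ, 0 < ε →
    ∃ᶠ n : ℕ in atTop, Real.exp (-ε * n) ≤ PSAB d n {γ | v * n ≤ (ycoord (γ n) : ℝ)}

/-- `SAB_{n,v}`: bridges of length `n` with `y(γ_n) ≥ v n`. -/
def SABv (d n : ℕ) (v : ℝ) : Set (ℕ → V d) :=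
  {γ | γ ∈ SABset d n ∧ v * n ≤ (ycoord (γ n) : ℝ)}

/-- The uniform probability of an event `A` under `P_SAB_{n,v}`. -/
noncomputable def PSABv (d n : ℕ) (v : ℝ) (A : Set (ℕ → V d)) : ℝ :=
  (Set.ncard (SABv d n v ∩ A) : ℝ) / (Set.ncard (SABv d n v) : ℝ)

/-- The `h`-visiting edge-set `V_{h,h+1}(γ)` of a walk of length `n`. -/
def visitEdges (d n : ℕ) (γ : ℕ → V d) (h : ℤ) : Set (V d × V d) :=
  {e | (∃ i, i < n ∧ e = (γ i, γ (i + 1))) ∧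
    ((ycoord e.1 = h ∧ ycoord e.2 = h + 1) ∨ (ycoord e.1 = h + 1 ∧ ycoord e.2 = h))}

/-- `SAB^m_{n,v,δ}`: members of `SAB_{n,v}` for which at least `δ n` levels `h` satisfy
`1 ≤ |V_{h,h+1}(γ)| ≤ m`. -/
def SABvk (d n : ℕ) (v δ : ℝ) (m : ℕ) : Set (ℕ → V d) :=
  {γ | γ ∈ SABv d n v ∧
    δ * n ≤ (Set.ncard {h : ℤ |
      1 ≤ Set.ncard (visitEdges d n γ h) ∧ Set.ncard (visitEdges d n γ h) ≤ m} : ℝ)}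

/-- `(i,j)` is a zigzag of the bridge `γ` of length `n`: `i` is the largest index attaining
the maximum of `y(γ_k)` over `1 ≤ k ≤ j`, and `j` is the largest index attaining the minimum
of `y(γ_k)` over `i ≤ k ≤ n`. -/
def IsZigZag {d : ℕ} (n : ℕ) (γ : ℕ → V d) (i j : ℕ) : Prop :=
  1 ≤ i ∧ i ≤ j ∧ j ≤ n ∧
  (∀ k, 1 ≤ k → k ≤ j → ycoord (γ k) ≤ ycoord (γ i)) ∧
  (∀ k, 1 ≤ k → k ≤ j → ycoord (γ k) = ycoord (γ i) → k ≤ i) ∧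
  (∀ k, i ≤ k → k ≤ n → ycoord (γ j) ≤ ycoord (γ k)) ∧
  ∀ k, i ≤ k → k ≤ n → ycoord (γ k) = ycoord (γ j) → k ≤ j

/-- Concatenation of two (frozen) walks, the first having length `m`. -/
def concatW {d : ℕ} (m : ℕ) (γ γ' : ℕ → V d) : ℕ → V d :=
  fun k => if k ≤ m then γ k else γ m + (γ' (k - m) - γ' 0)

/-- Concatenation of a finite list of (frozen) walks. -/
noncomputable def concatList {d : ℕ} : List (ℕ → V d) → ℕ → V d
  | [] => fun _ => 0
  | g :: l => concatW (len g) g (concatList l)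

/-- Orthogonal reflection in the hyperplane `{u : y(u) = c}`. -/
def reflY {d : ℕ} (c : ℤ) (u : V d) : V d :=
  fun m => if (m : ℕ) = 1 then 2 * c - u m else u m

/-- The unfolding `Unf_{(i,j)}(γ) = γ_{[0,i]} ∘ R_{γ_i}(γ_{[i,j]}) ∘ γ_{[j,n]}`,
written pointwise. -/
def unf {d : ℕ} (γ : ℕ → V d) (i j : ℕ) : ℕ → V d :=
  fun k => if k ≤ i then γ k
    else if k ≤ j then reflY (ycoord (γ i)) (γ k)
    else fun m => if (m : ℕ) = 1 then γ k m + 2 * (ycoord (γ i) - ycoord (γ j)) else γ k m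

/-- The first standard basis vector `e₁`. -/
def e1vec (d : ℕ) : V d := fun m => if (m : ℕ) = 0 then 1 else 0

/-- Clockwise rotation by `π/2` about the point `(x(c), y(c))` in the first two coordinates,
identity in the remaining coordinates. -/
def rotCW {d : ℕ} (c u : V d) : V d :=
  fun m => if (m : ℕ) = 0 then xcoord c + (ycoord u - ycoord c)
    else if (m : ℕ) = 1 then ycoord c - (xcoord u - xcoord c)
    else u m

/-- `γ_i` is a diamond point of the walk `γ` of length `n`. -/
def IsDiamond {d : ℕ} (n : ℕ) (γ : ℕ → V d) (i : ℕ) : Prop :=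
  i ≤ n ∧
  (∀ j, i ≤ j → j ≤ n →
    xcoord (γ i) + ycoord (γ i) ≤ xcoord (γ j) + ycoord (γ j) ∧
    ycoord (γ i) - xcoord (γ i) ≤ ycoord (γ j) - xcoord (γ j)) ∧
  ∀ j, j ≤ i →
    xcoord (γ j) + ycoord (γ j) ≤ xcoord (γ i) + ycoord (γ i) ∧
    ycoord (γ j) - xcoord (γ j) ≤ ycoord (γ i) - xcoord (γ i)

/-- The stickbreak operation `γ_{[0,a]} ∘ τ^{e₁} ∘ ρ(γ_{[a,b]}) ∘ τ^{e₁} ∘ γ_{[b,n]}`,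
written pointwise (a walk of length `n + 2`). -/
def stickbreak {d : ℕ} (γ : ℕ → V d) (a b : ℕ) : ℕ → V d :=
  fun k => if k ≤ a then γ k
    else if k ≤ b + 1 then rotCW (γ a) (γ (k - 1)) + e1vec d
    else γ (k - 2) + (rotCW (γ a) (γ b) + e1vec d + e1vec d - γ b)

/-! A step of a walk changes `y` by at most one, so every level `h` with `0 ≤ h < y(γ_n)` is
crossed by some edge. An edge crosses a single level, so at most `n / (m + 1)` levels are
crossed more than `m` times; with `m = ⌈2/v⌉` these are at most `v n / 2` of the at least `v n`
crossed levels. -/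

open Finset

lemma natAbs_ycoord_sub_le_one_of_adj {d : ℕ} {u w : V d} (huw : adj u w) :
    (ycoord u - ycoord w).natAbs ≤ 1 := by
  unfold ycoord
  split_ifs with hd
  · exact (single_le_sum (f := fun i => (u i - w i).natAbs) (fun _ _ => Nat.zero_le _)
      (mem_univ _)).trans_eq huw
  · simp

def crossingSteps (f : ℕ → ℤ) (n : ℕ) (h : ℤ) : Finset ℕ :=
  {i ∈ range n | (f i = h ∧ f (i + 1) = h + 1) ∨ (f i = h + 1 ∧ f (i + 1) = h)}

section crossingSteps

variable {f : ℕ → ℤ} {n : ℕ}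

lemma crossingSteps_disjoint {h h' : ℤ} (hne : h ≠ h') :
    Disjoint (crossingSteps f n h) (crossingSteps f n h') := by
  refine disjoint_left.mpr fun i hi hi' => ?_
  simp only [crossingSteps, mem_filter] at hi hi'
  omega

lemma mul_card_filter_le_card_crossingSteps_le (m : ℕ) (B : Finset ℤ) :
    m * #{h ∈ B | m ≤ #(crossingSteps f n h)} ≤ n := by
  set C := {h ∈ B | m ≤ #(crossingSteps f n h)}
  calc m * #C = #C • m := by rw [smul_eq_mul, mul_comm]
    _ ≤ ∑ h ∈ C, #(crossingSteps f n h) := card_nsmul_le_sum _ _ _ fun h hh => (mem_filter.mp hh).2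
    _ = #(C.biUnion (crossingSteps f n)) :=
      (card_biUnion fun _ _ _ _ hne => crossingSteps_disjoint hne).symm
    _ ≤ #(range n) := card_le_card (biUnion_subset.mpr fun _ _ => filter_subset _ _)
    _ = n := card_range n

lemma crossingSteps_nonempty (hf : ∀ i < n, (f i - f (i + 1)).natAbs ≤ 1) {h : ℤ}
    (h0 : f 0 ≤ h) (hn : h < f n) : (crossingSteps f n h).Nonempty := by
  by_contra hempty
  have below : ∀ i ≤ n, f i ≤ h := by
    intro i
    induction i with
    | zero => exact fun _ => h0
    | succ k ih =>
      intro hk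
      have hstep := hf k (by omega)
      have hk' := ih (by omega)
      by_contra hgt
      exact hempty ⟨k, mem_filter.mpr ⟨mem_range.mpr (by omega), by omega⟩⟩
  exact absurd (below n le_rfl) (not_le.mpr hn)

lemma mem_image_of_crossingSteps_nonempty {h : ℤ} (hne : (crossingSteps f n h).Nonempty) :
    h ∈ (range (n + 1)).image f := by
  obtain ⟨i, hi⟩ := hne
  simp only [crossingSteps, mem_filter, mem_range] at hi
  rcases hi with ⟨hi, ⟨hup, -⟩ | ⟨-, hdown⟩⟩
  · exact mem_image.mpr ⟨i, mem_range.mpr (by omega), hup⟩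
  · exact mem_image.mpr ⟨i + 1, mem_range.mpr (by omega), hdown⟩

end crossingSteps

lemma visitEdges_eq_image_crossingSteps (d n : ℕ) (γ : ℕ → V d) (h : ℤ) :
    visitEdges d n γ h =
      (fun i => (γ i, γ (i + 1))) '' crossingSteps (fun i => ycoord (γ i)) n h := by
  ext e
  simp only [visitEdges, crossingSteps, coe_filter, mem_range, Set.mem_ofPred_eq, Set.mem_image]
  constructor
  · rintro ⟨⟨i, hi, rfl⟩, hlevel⟩
    exact ⟨i, ⟨hi, hlevel⟩, rfl⟩
  · rintro ⟨i, ⟨hi, hlevel⟩, rfl⟩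
    exact ⟨⟨i, hi, rfl⟩, hlevel⟩

section visitEdges

variable {d n : ℕ} {γ : ℕ → V d}

lemma visitEdges_finite (h : ℤ) : (visitEdges d n γ h).Finite := by
  rw [visitEdges_eq_image_crossingSteps]
  exact (finite_toSet _).image _

lemma ncard_visitEdges_le_card_crossingSteps (h : ℤ) :
    (visitEdges d n γ h).ncard ≤ #(crossingSteps (fun i => ycoord (γ i)) n h) := by
  rw [visitEdges_eq_image_crossingSteps, ← Set.ncard_coe_finset]
  exact Set.ncard_image_le (finite_toSet _)

lemma visitEdges_nonempty_iff (h : ℤ) :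
    (visitEdges d n γ h).Nonempty ↔ (crossingSteps (fun i => ycoord (γ i)) n h).Nonempty := by
  rw [visitEdges_eq_image_crossingSteps, Set.image_nonempty, coe_nonempty]

lemma finite_setOf_visitEdges_nonempty : {h : ℤ | (visitEdges d n γ h).Nonempty}.Finite :=
  (finite_toSet ((range (n + 1)).image fun i => ycoord (γ i))).subset fun _ hh =>
    mem_image_of_crossingSteps_nonempty ((visitEdges_nonempty_iff _).mp hh)

theorem IsWalk.mul_ycoord_sub_le (hγ : IsWalk n γ) (m : ℕ) :
    ((m + 1 : ℕ) : ℤ) * (ycoord (γ n) - ycoord (γ 0)) ≤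
      ((m + 1 : ℕ) : ℤ) * {h : ℤ | 1 ≤ (visitEdges d n γ h).ncard ∧
        (visitEdges d n γ h).ncard ≤ m}.ncard + n := by
  set f : ℕ → ℤ := fun i => ycoord (γ i)
  set A := {h : ℤ | 1 ≤ (visitEdges d n γ h).ncard ∧ (visitEdges d n γ h).ncard ≤ m}
  set B := Ico (f 0) (f n)
  set C := {h ∈ B | m + 1 ≤ #(crossingSteps f n h)}
  have hf : ∀ i < n, (f i - f (i + 1)).natAbs ≤ 1 := fun i hi =>
    natAbs_ycoord_sub_le_one_of_adj (hγ.1 i hi)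
  have hA_finite : A.Finite := finite_setOf_visitEdges_nonempty.subset fun h hh =>
    (Set.ncard_pos (visitEdges_finite h)).mp hh.1
  have hBC : (↑(B \ C) : Set ℤ) ⊆ A := by
    intro h hh
    simp only [coe_sdiff, Set.mem_sdiff, mem_coe, C, mem_filter, not_and, not_le] at hh
    obtain ⟨hB, hC⟩ := hh
    have hne := crossingSteps_nonempty hf (mem_Ico.mp hB).1 (mem_Ico.mp hB).2
    refine ⟨(Set.ncard_pos (visitEdges_finite h)).mpr ((visitEdges_nonempty_iff h).mpr hne), ?_⟩
    have : (visitEdges d n γ h).ncard ≤ #(crossingSteps f n h) :=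
      ncard_visitEdges_le_card_crossingSteps h
    have := hC hB
    omega
  have hcard : #B ≤ A.ncard + #C := by
    have := le_card_sdiff C B
    have := (Set.ncard_coe_finset (B \ C)).symm.trans_le (Set.ncard_le_ncard hBC hA_finite)
    omega
  have hC : (m + 1) * #C ≤ n := mul_card_filter_le_card_crossingSteps_le (m + 1) B
  have hB : f n - f 0 ≤ #B := by
    rw [Int.card_Ico]
    exact Int.self_le_toNat _
  have hcount : (m + 1) * #B ≤ (m + 1) * A.ncard + n := by nlinarith
  calc ((m + 1 : ℕ) : ℤ) * (f n - f 0) ≤ ((m + 1 : ℕ) : ℤ) * #B := by gcongr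
    _ ≤ ((m + 1 : ℕ) : ℤ) * A.ncard + n := by exact_mod_cast hcount

end visitEdges

theorem sabv_subset_sabvk_general (d : ℕ) (v : ℝ) (hv : 0 < v) (n : ℕ) :
    SABv d n v ⊆ SABvk d n v (v / 2) ⌈2 / v⌉₊ := by
  rintro γ ⟨⟨hγ0, hbridge⟩, hyn⟩
  refine ⟨⟨⟨hγ0, hbridge⟩, hyn⟩, ?_⟩
  set m := ⌈2 / v⌉₊
  have hcross := hbridge.1.1.mul_ycoord_sub_le m
  have hy0 : ycoord (γ 0) = 0 := by simp [hγ0, ycoord]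
  rw [hy0, sub_zero] at hcross
  set good := {h : ℤ | 1 ≤ (visitEdges d n γ h).ncard ∧ (visitEdges d n γ h).ncard ≤ m}
  have hcross' : ((m : ℝ) + 1) * ycoord (γ n) ≤ ((m : ℝ) + 1) * good.ncard + n := by
    exact_mod_cast hcross
  have hmv : 2 ≤ (m : ℝ) * v := (div_le_iff₀ hv).mp (Nat.le_ceil _)
  show v / 2 * n ≤ good.ncard
  nlinarith

/-- For every `v > 0` and every `n`, `SAB_{n,v} ⊆ SAB^{⌈2/v⌉}_{n,v,v/2}`. -/
theorem sabv_subset_sabvk (d : ℕ) (hd : 2 ≤ d) (v : ℝ) (hv : 0 < v) (n : ℕ) :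
    SABv d n v ⊆ SABvk d n v (v / 2) ⌈2 / v⌉₊ :=
  sabv_subset_sabvk_general d v hv n

end SAWpaper
end

section
/- Let γ ∈ SAB_n. The central sections of the zigzags of γ are pairwise disjoint: for distinct zigzags (i,j) and (i′,j′) of γ, the vertex sets {γ_k : i ≤ k ≤ j} and {γ_k : i′ ≤ k ≤ j′} are disjoint. -/
open scoped BigOperators ENNReal
open Filter MeasureTheory

namespace SAWpaper

/-- **Lemma.** The central sections of distinct zigzags of a bridge are pairwise disjoint. -/
theorem zigzag_central_sections_disjoint (d : ℕ) (hd : 2 ≤ d) (n : ℕ) (γ : ℕ → V d)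
    (hγ : γ ∈ SABset d n) (i j i' j' : ℕ) (h1 : IsZigZag n γ i j)
    (h2 : IsZigZag n γ i' j') (hne : (i, j) ≠ (i', j')) :
    Disjoint {p : V d | ∃ k, i ≤ k ∧ k ≤ j ∧ γ k = p}
      {p : V d | ∃ k, i' ≤ k ∧ k ≤ j' ∧ γ k = p} := by
  obtain ⟨h0, ⟨hW, hinj⟩, _, _⟩ := hγ
  obtain ⟨hi1, hij, hjn, hmax, hmaxlast, hmin, hminlast⟩ := h1
  obtain ⟨hi1', hij', hjn', hmax', hmaxlast', hmin', hminlast'⟩ := h2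
  rw [Set.disjoint_left]
  rintro p ⟨k, hik, hkj, hkp⟩ ⟨k', hik', hkj', hkp'⟩
  have hkk : k = k' :=
    hinj k (le_trans hkj hjn) k' (le_trans hkj' hjn') (hkp.trans hkp'.symm)
  subst hkk
  have A : i' ≤ j := le_trans hik' hkj
  have B : i ≤ j' := le_trans hik hkj'
  have hy : ycoord (γ i) = ycoord (γ i') :=
    le_antisymm (hmax' i hi1 B) (hmax i' hi1' A)
  have hii : i = i' :=
    le_antisymm (hmaxlast' i hi1 B hy) (hmaxlast i' hi1' A hy.symm)
  have hy2 : ycoord (γ j) = ycoord (γ j') :=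
    le_antisymm (hmin j' B hjn') (hmin' j (hii ▸ hij) hjn)
  have hjj : j = j' :=
    le_antisymm (hminlast' j (hii ▸ hij) hjn hy2) (hminlast j' B hjn' hy2.symm)
  exact hne (by rw [hii, hjj])

end SAWpaper
end

section
/- Let γ ∈ SAB_n. If (i,i) ∈ ZigZag(γ) for some index i, then γ_i is a renewal point of γ, i.e. γ_i ∈ R_γ. -/
open scoped BigOperators ENNReal
open Filter MeasureTheory

namespace SAWpaper

/-- **Lemma.** If `(i,i)` is a zigzag of a bridge `γ`, then `γ_i` is a renewal point. -/
theorem zigzag_diag_renewal (d : ℕ) (hd : 2 ≤ d) (n : ℕ) (γ : ℕ → V d)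
    (hγ : γ ∈ SABset d n) (i : ℕ) (h : IsZigZag n γ i i) :
    γ i ∈ renewalPts d n γ := by
  obtain ⟨hγ0, hsaw, hmin, hmax⟩ := hγ
  obtain ⟨hi1, hii, hin, hzmax, hzmaxu, hzmin, hzminu⟩ := h
  refine ⟨i, ⟨hin, ?_, ?_, ?_, ?_⟩, rfl⟩
  · intro j hj0 hji; exact hmin j hj0 (hji.trans hin)
  · intro j hji
    rcases Nat.eq_zero_or_pos j with rfl | hj0
    · exact (hmin i hi1 hin).le
    · exact hzmax j hj0 hji
  · intro j hij hjn
    have h1 := hzmin j (le_of_lt hij) hjn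
    rcases lt_or_eq_of_le h1 with h2 | h2
    · exact h2
    · exact absurd (hzminu j (le_of_lt hij) hjn h2.symm) (not_le.mpr hij)
  · intro j _ hjn; exact hmax j hjn

end SAWpaper
end

section
/- Let γ ∈ SAB_n. (1) For every (i,j) ∈ ZigZag(γ), both γ_i and the point Unf_{(i,j)}(γ)_j belong to the renewal set R_{Unf_{(i,j)}(γ)}. (2) For every (i,j) ∈ ZigZag(γ), ZigZag(γ) \ {(i,j)} ⊆ ZigZag(Unf_{(i,j)}(γ)). (3) For any two zigzags z₁, z₂ ∈ ZigZag(γ), the unfoldings commute: Unf_{z₂}(Unf_{z₁}(γ)) = Unf_{z₁}(Unf_{z₂}(γ)) (these composites being well defined by (2)). -/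
open scoped BigOperators ENNReal
open Filter MeasureTheory

namespace SAWpaper

lemma ycoord_unf {d : ℕ} (hd : 1 < d) (γ : ℕ → V d) (i j k : ℕ) :
    ycoord (unf γ i j k) = if k ≤ i then ycoord (γ k)
      else if k ≤ j then 2 * ycoord (γ i) - ycoord (γ k)
      else ycoord (γ k) + 2 * (ycoord (γ i) - ycoord (γ j)) := by
  unfold unf
  split_ifs <;> simp [ycoord, reflY, hd]

lemma unf_y1 {d : ℕ} (hd : 1 < d) (γ : ℕ → V d) (i j k : ℕ) (h : k ≤ i) :
    ycoord (unf γ i j k) = ycoord (γ k) := by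
  rw [ycoord_unf hd, if_pos h]

lemma unf_y2 {d : ℕ} (hd : 1 < d) (γ : ℕ → V d) (i j k : ℕ) (h1 : ¬ k ≤ i) (h2 : k ≤ j) :
    ycoord (unf γ i j k) = 2 * ycoord (γ i) - ycoord (γ k) := by
  rw [ycoord_unf hd, if_neg h1, if_pos h2]

lemma unf_y3 {d : ℕ} (hd : 1 < d) (γ : ℕ → V d) (i j k : ℕ) (h1 : ¬ k ≤ i) (h2 : ¬ k ≤ j) :
    ycoord (unf γ i j k) = ycoord (γ k) + 2 * (ycoord (γ i) - ycoord (γ j)) := by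
  rw [ycoord_unf hd, if_neg h1, if_neg h2]

lemma unf_apply_ne {d : ℕ} (γ : ℕ → V d) (i j k : ℕ) (m : Fin d) (hm : (m : ℕ) ≠ 1) :
    unf γ i j k m = γ k m := by
  unfold unf reflY
  split_ifs <;> simp [hm]

lemma unf_apply_eq {d : ℕ} (γ : ℕ → V d) (i j k : ℕ) (m : Fin d) (hm : (m : ℕ) = 1) :
    unf γ i j k m = if k ≤ i then γ k m
      else if k ≤ j then 2 * ycoord (γ i) - γ k m
      else γ k m + 2 * (ycoord (γ i) - ycoord (γ j)) := by
  unfold unf reflY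
  split_ifs <;> simp [hm]

lemma unf_comm_aux {d : ℕ} (hd : 1 < d) (γ : ℕ → V d) (i j i' j' : ℕ)
    (hij : i ≤ j) (hji' : j < i') (hi'j' : i' ≤ j') :
    unf (unf γ i j) i' j' = unf (unf γ i' j') i j := by
  have e1 : ycoord (unf γ i j i') = ycoord (γ i') + 2 * (ycoord (γ i) - ycoord (γ j)) := by
    rw [ycoord_unf hd, if_neg (by omega), if_neg (by omega)]
  have e2 : ycoord (unf γ i j j') = ycoord (γ j') + 2 * (ycoord (γ i) - ycoord (γ j)) := by
    rw [ycoord_unf hd, if_neg (by omega), if_neg (by omega)]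
  have e3 : ycoord (unf γ i' j' i) = ycoord (γ i) := by
    rw [ycoord_unf hd, if_pos (by omega)]
  have e4 : ycoord (unf γ i' j' j) = ycoord (γ j) := by
    rw [ycoord_unf hd, if_pos (by omega)]
  funext k
  funext m
  by_cases hm : (m : ℕ) = 1
  · rw [unf_apply_eq (unf γ i j) i' j' k m hm, unf_apply_eq (unf γ i' j') i j k m hm,
      unf_apply_eq γ i j k m hm, unf_apply_eq γ i' j' k m hm, e1, e2, e3, e4]
    split_ifs <;> omega
  · rw [unf_apply_ne (unf γ i j) i' j' k m hm, unf_apply_ne (unf γ i' j') i j k m hm,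
      unf_apply_ne γ i j k m hm, unf_apply_ne γ i' j' k m hm]

lemma zigzag_sep {d n : ℕ} {γ : ℕ → V d} {i j i' j' : ℕ}
    (h1 : IsZigZag n γ i j) (h2 : IsZigZag n γ i' j') (hne : (i', j') ≠ (i, j)) :
    j < i' ∨ j' < i := by
  obtain ⟨hi1, hij, hjn, h4, h5, h6, h7⟩ := h1
  obtain ⟨hi1', hij', hjn', h4', h5', h6', h7'⟩ := h2
  by_contra hc
  push_neg at hc
  obtain ⟨hc1, hc2⟩ := hc
  have e1 : ycoord (γ i') ≤ ycoord (γ i) := h4 i' hi1' hc1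
  have e2 : ycoord (γ i) ≤ ycoord (γ i') := h4' i hi1 hc2
  have eii : i = i' := le_antisymm (h5' i hi1 hc2 (by omega)) (h5 i' hi1' hc1 (by omega))
  have e3 : ycoord (γ j) ≤ ycoord (γ j') := h6 j' (by omega) hjn'
  have e4 : ycoord (γ j') ≤ ycoord (γ j) := h6' j (by omega) hjn
  have ejj : j = j' := le_antisymm (h7' j (by omega) hjn (by omega)) (h7 j' (by omega) hjn' (by omega))
  exact hne (by simp [eii, ejj])

/-- **Lemma.** (1) Unfolding a zigzag `(i,j)` makes `γ_i` and `Unf_{(i,j)}(γ)_j` renewal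
points of the outcome; (2) all other zigzags survive the unfolding;
(3) unfoldings at two zigzags commute. -/
theorem unf_properties (d : ℕ) (hd : 2 ≤ d) (n : ℕ) (γ : ℕ → V d)
    (hγ : γ ∈ SABset d n) :
    (∀ i j, IsZigZag n γ i j →
      γ i ∈ renewalPts d n (unf γ i j) ∧ unf γ i j j ∈ renewalPts d n (unf γ i j)) ∧
    (∀ i j i' j', IsZigZag n γ i j → IsZigZag n γ i' j' → (i', j') ≠ (i, j) →
      IsZigZag n (unf γ i j) i' j') ∧
    (∀ i j i' j', IsZigZag n γ i j → IsZigZag n γ i' j' →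
      unf (unf γ i j) i' j' = unf (unf γ i' j') i j) := by
  have hd1 : 1 < d := hd
  obtain ⟨hγ0, hsaw, hb1, hb2⟩ := hγ
  refine ⟨?_, ?_, ?_⟩
  · -- Part (1)
    intro i j hz
    obtain ⟨hi1, hij, hjn, h4, h5, h6, h7⟩ := hz
    have hBA : ycoord (γ j) ≤ ycoord (γ i) := h6 i le_rfl (by omega)
    have hdeg : j = n → i = n := by
      intro he
      have e1 := hb2 i (by omega)
      have e2 := h4 n (by omega) (by omega)
      have e3 := h5 n (by omega) (by omega) (by omega)
      omega
    have Yj : ycoord (unf γ i j j) = 2 * ycoord (γ i) - ycoord (γ j) := by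
      by_cases h : j ≤ i
      · have hij' : i = j := le_antisymm hij h
        subst hij'
        rw [unf_y1 hd1 γ i i i le_rfl]
        ring
      · rw [unf_y2 hd1 γ i j j h le_rfl]
    constructor
    · refine ⟨i, ⟨by omega, ?_, ?_, ?_, ?_⟩, by simp [unf]⟩
      · intro k hk0 hki
        rw [unf_y1 hd1 γ i j 0 (by omega), unf_y1 hd1 γ i j k hki]
        exact hb1 k hk0 (by omega)
      · intro k hki
        rw [unf_y1 hd1 γ i j k hki, unf_y1 hd1 γ i j i le_rfl]
        rcases Nat.eq_zero_or_pos k with h0 | h0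
        · subst h0
          exact le_of_lt (hb1 i (by omega) (by omega))
        · exact h4 k h0 (by omega)
      · intro k hik hkn
        rw [unf_y1 hd1 γ i j i le_rfl]
        by_cases hkj : k ≤ j
        · rw [unf_y2 hd1 γ i j k (by omega) hkj]
          have e1 := h4 k (by omega) hkj
          have e2 : ycoord (γ k) ≠ ycoord (γ i) := fun he => by
            have := h5 k (by omega) hkj he; omega
          omega
        · rw [unf_y3 hd1 γ i j k (by omega) hkj]
          have e1 := h6 k (by omega) hkn
          have e2 : ycoord (γ k) ≠ ycoord (γ j) := fun he => by
            have := h7 k (by omega) hkn he; omega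
          omega
      · intro k hik hkn
        by_cases hnj : n ≤ j
        · have hk : k = n := by have := hdeg (by omega); omega
          subst hk
          exact le_rfl
        · rw [unf_y3 hd1 γ i j n (by omega) hnj]
          by_cases hki : k ≤ i
          · rw [unf_y1 hd1 γ i j k hki]
            have e1 := h6 n (by omega) le_rfl
            have e2 := h4 k (by omega) (by omega)
            omega
          · by_cases hkj : k ≤ j
            · rw [unf_y2 hd1 γ i j k hki hkj]
              have e1 := h6 n (by omega) le_rfl
              have e2 := h6 k (by omega) hkn
              omega
            · rw [unf_y3 hd1 γ i j k hki hkj]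
              have := hb2 k hkn
              omega
    · refine ⟨j, ⟨hjn, ?_, ?_, ?_, ?_⟩, rfl⟩
      · intro k hk0 hkj
        rw [unf_y1 hd1 γ i j 0 (by omega)]
        by_cases hki : k ≤ i
        · rw [unf_y1 hd1 γ i j k hki]
          exact hb1 k hk0 (by omega)
        · rw [unf_y2 hd1 γ i j k hki hkj]
          have e1 := h4 k (by omega) hkj
          have e2 := hb1 i (by omega) (by omega)
          omega
      · intro k hkj
        rw [Yj]
        by_cases hki : k ≤ i
        · rw [unf_y1 hd1 γ i j k hki]
          have e : ycoord (γ k) ≤ ycoord (γ i) := by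
            rcases Nat.eq_zero_or_pos k with h0 | h0
            · subst h0
              exact le_of_lt (hb1 i (by omega) (by omega))
            · exact h4 k h0 (by omega)
          omega
        · rw [unf_y2 hd1 γ i j k hki hkj]
          have := h6 k (by omega) (by omega)
          omega
      · intro k hjk hkn
        rw [Yj, unf_y3 hd1 γ i j k (by omega) (by omega)]
        have e1 := h6 k (by omega) hkn
        have e2 : ycoord (γ k) ≠ ycoord (γ j) := fun he => by
          have := h7 k (by omega) hkn he; omega
        omega
      · intro k hjk hkn
        by_cases hnj : n ≤ j
        · have hk : k = n := by omega
          subst hk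
          exact le_rfl
        · by_cases hkj : k ≤ j
          · have hk : k = j := le_antisymm hkj hjk
            rw [hk, Yj, unf_y3 hd1 γ i j n (by omega) hnj]
            have := h6 n (by omega) le_rfl
            omega
          · rw [unf_y3 hd1 γ i j k (by omega) hkj, unf_y3 hd1 γ i j n (by omega) hnj]
            have := hb2 k hkn
            omega
  · -- Part (2)
    intro i j i' j' hz hz' hne
    have hsep := zigzag_sep hz hz' hne
    obtain ⟨hi1, hij, hjn, h4, h5, h6, h7⟩ := hz
    obtain ⟨hi1', hij', hjn', h4', h5', h6', h7'⟩ := hz'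
    have hBA : ycoord (γ j) ≤ ycoord (γ i) := h6 i le_rfl (by omega)
    refine ⟨hi1', hij', hjn', ?_, ?_, ?_, ?_⟩
    · intro k hk1 hkj'
      rcases hsep with hs | hs
      · rw [unf_y3 hd1 γ i j i' (by omega) (by omega)]
        by_cases hki : k ≤ i
        · rw [unf_y1 hd1 γ i j k hki]
          have := h4' k hk1 hkj'
          omega
        · by_cases hkj : k ≤ j
          · rw [unf_y2 hd1 γ i j k hki hkj]
            have e1 := h6 k (by omega) (by omega)
            have e2 := h6 i' (by omega) (by omega)
            omega
          · rw [unf_y3 hd1 γ i j k (by omega) hkj]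
            have := h4' k hk1 hkj'
            omega
      · rw [unf_y1 hd1 γ i j k (by omega), unf_y1 hd1 γ i j i' (by omega)]
        exact h4' k hk1 hkj'
    · intro k hk1 hkj' heq
      rcases hsep with hs | hs
      · by_cases hkj : k ≤ j
        · omega
        · rw [unf_y3 hd1 γ i j k (by omega) hkj,
            unf_y3 hd1 γ i j i' (by omega) (by omega)] at heq
          exact h5' k hk1 hkj' (by omega)
      · rw [unf_y1 hd1 γ i j k (by omega), unf_y1 hd1 γ i j i' (by omega)] at heq
        exact h5' k hk1 hkj' heq
    · intro k hik hkn
      rcases hsep with hs | hs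
      · rw [unf_y3 hd1 γ i j j' (by omega) (by omega),
          unf_y3 hd1 γ i j k (by omega) (by omega)]
        have := h6' k hik hkn
        omega
      · rw [unf_y1 hd1 γ i j j' (by omega)]
        by_cases hki : k ≤ i
        · rw [unf_y1 hd1 γ i j k hki]
          exact h6' k hik hkn
        · by_cases hkj : k ≤ j
          · rw [unf_y2 hd1 γ i j k hki hkj]
            have e1 := h4 k (by omega) hkj
            have e2 := h6' i (by omega) (by omega)
            omega
          · rw [unf_y3 hd1 γ i j k hki hkj]
            have := h6' k hik hkn
            omega
    · intro k hik hkn heq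
      rcases hsep with hs | hs
      · rw [unf_y3 hd1 γ i j j' (by omega) (by omega),
          unf_y3 hd1 γ i j k (by omega) (by omega)] at heq
        exact h7' k hik hkn (by omega)
      · rw [unf_y1 hd1 γ i j j' (by omega)] at heq
        by_cases hki : k ≤ i
        · rw [unf_y1 hd1 γ i j k hki] at heq
          exact h7' k hik hkn heq
        · by_cases hkj : k ≤ j
          · rw [unf_y2 hd1 γ i j k hki hkj] at heq
            have e1 := h4 k (by omega) hkj
            have e2 := h6' i (by omega) (by omega)
            have e3 : ycoord (γ i) ≠ ycoord (γ j') := fun he => by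
              have := h7' i (by omega) (by omega) he; omega
            omega
          · rw [unf_y3 hd1 γ i j k hki hkj] at heq
            have e1 := h6' k hik hkn
            exact h7' k hik hkn (by omega)
  · -- Part (3)
    intro i j i' j' hz hz'
    by_cases he : (i', j') = (i, j)
    · obtain ⟨rfl, rfl⟩ := Prod.mk.inj he
      rfl
    · rcases zigzag_sep hz hz' he with h | h
      · exact unf_comm_aux hd1 γ i j i' j' hz.2.1 h hz'.2.1
      · exact (unf_comm_aux hd1 γ i' j' i j hz'.2.1 h hz.2.1).symm

end SAWpaper
end

section
/- The stickbreak operation at diamond points produces a self-avoiding walk: let γ ∈ SAB_n and let a < b be indices such that γ_a and γ_b are diamond points of γ. Let ρ : ℝ^d → ℝ^d act as the clockwise rotation by angle π/2 about the point (x(γ_a), y(γ_a)) in the first two coordinates and as the identity in the remaining coordinates, and let τ^{e₁} denote the length-one walk from 0 to e₁ (one step east). Then the concatenation γ_{[0,a]} ∘ τ^{e₁} ∘ ρ(γ_{[a,b]}) ∘ τ^{e₁} ∘ γ_{[b,n]} is a self-avoiding walk of length n + 2. -/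
open scoped BigOperators ENNReal
open Filter MeasureTheory

namespace SAWpaper

section StickbreakAux

variable {d : ℕ}

lemma xcoord_add' (u v : V d) : xcoord (u + v) = xcoord u + xcoord v := by
  unfold xcoord; split <;> simp

lemma ycoord_add' (u v : V d) : ycoord (u + v) = ycoord u + ycoord v := by
  unfold ycoord; split <;> simp

lemma xcoord_sub' (u v : V d) : xcoord (u - v) = xcoord u - xcoord v := by
  unfold xcoord; split <;> simp

lemma ycoord_sub' (u v : V d) : ycoord (u - v) = ycoord u - ycoord v := by
  unfold ycoord; split <;> simp

lemma xcoord_rot (h : 2 ≤ d) (c u : V d) :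
    xcoord (rotCW c u) = xcoord c + (ycoord u - ycoord c) := by
  have h0 : 0 < d := by omega
  simp [xcoord, rotCW, h0]

lemma ycoord_rot (h : 2 ≤ d) (c u : V d) :
    ycoord (rotCW c u) = ycoord c - (xcoord u - xcoord c) := by
  have h1 : 1 < d := by omega
  simp [ycoord, rotCW, h1]

lemma xcoord_e1 (h : 0 < d) : xcoord (e1vec d) = 1 := by
  simp [xcoord, e1vec, h]

lemma ycoord_e1 (h : 1 < d) : ycoord (e1vec d) = 0 := by
  simp [ycoord, e1vec, h]

lemma adj_translate {u v : V d} (w : V d) (h : adj u v) : adj (u + w) (v + w) := by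
  unfold adj at *
  simpa using h

lemma adj_e1 (h : 0 < d) (u : V d) : adj u (u + e1vec d) := by
  unfold adj
  have : ∀ i : Fin d, (u i - (u + e1vec d) i).natAbs =
      if i = (⟨0, h⟩ : Fin d) then 1 else 0 := by
    intro i
    simp only [Pi.add_apply, e1vec]
    by_cases hi : i = (⟨0, h⟩ : Fin d)
    · subst hi; simp
    · have : (i : ℕ) ≠ 0 := by
        intro h0; exact hi (Fin.ext h0)
      simp [this, hi]
  rw [Finset.sum_congr rfl fun i _ => this i]
  simp

lemma rot_adj (h : 2 ≤ d) (c : V d) {u v : V d} (hadj : adj u v) :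
    adj (rotCW c u) (rotCW c v) := by
  have h0 : 0 < d := by omega
  have h1 : 1 < d := by omega
  unfold adj at *
  have key : ∀ i : Fin d, (rotCW c u i - rotCW c v i).natAbs =
      (u (Equiv.swap ⟨0, h0⟩ ⟨1, h1⟩ i) - v (Equiv.swap ⟨0, h0⟩ ⟨1, h1⟩ i)).natAbs := by
    intro i
    by_cases hI0 : i = ⟨0, h0⟩
    · subst hI0
      rw [Equiv.swap_apply_left]
      simp [rotCW, xcoord, ycoord, h0, h1]
      all_goals omega
    · by_cases hI1 : i = ⟨1, h1⟩
      · subst hI1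
        rw [Equiv.swap_apply_right]
        simp [rotCW, xcoord, ycoord, h0, h1]
        all_goals omega
      · rw [Equiv.swap_apply_of_ne_of_ne hI0 hI1]
        have hv0 : (i : ℕ) ≠ 0 := fun hh => hI0 (Fin.ext hh)
        have hv1 : (i : ℕ) ≠ 1 := fun hh => hI1 (Fin.ext hh)
        simp [rotCW, hv0, hv1]
  rw [Finset.sum_congr rfl fun i _ => key i,
    Equiv.sum_comp (Equiv.swap ⟨0, h0⟩ ⟨1, h1⟩) (fun i => (u i - v i).natAbs)]
  exact hadj

lemma rot_injective (h : 2 ≤ d) (c : V d) {u v : V d}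
    (heq : rotCW c u = rotCW c v) : u = v := by
  have h0 : 0 < d := by omega
  have h1 : 1 < d := by omega
  have e0 := congrFun heq ⟨0, h0⟩
  have e1 := congrFun heq ⟨1, h1⟩
  simp [rotCW] at e0 e1
  have hy : ycoord u = ycoord v := by omega
  have hx : xcoord u = xcoord v := by omega
  unfold ycoord at hy; rw [dif_pos h1, dif_pos h1] at hy
  unfold xcoord at hx; rw [dif_pos h0, dif_pos h0] at hx
  funext m
  by_cases hm0 : (m : ℕ) = 0
  · have : m = (⟨0, h0⟩ : Fin d) := Fin.ext hm0
    rw [this]; exact hx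
  · by_cases hm1 : (m : ℕ) = 1
    · have : m = (⟨1, h1⟩ : Fin d) := Fin.ext hm1
      rw [this]; exact hy
    · have := congrFun heq m
      simpa [rotCW, hm0, hm1] using this

lemma rot_self (h : 2 ≤ d) (c : V d) : rotCW c c = c := by
  have h0 : 0 < d := by omega
  have h1 : 1 < d := by omega
  funext m
  by_cases hm0 : (m : ℕ) = 0
  · have hm : m = (⟨0, h0⟩ : Fin d) := Fin.ext hm0
    subst hm
    simp [rotCW, xcoord, dif_pos h0]
  · by_cases hm1 : (m : ℕ) = 1
    · have hm : m = (⟨1, h1⟩ : Fin d) := Fin.ext hm1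
      subst hm
      simp [rotCW, ycoord, xcoord, dif_pos h1]
    · simp [rotCW, hm0, hm1]

end StickbreakAux

/-- **Stickbreak produces a self-avoiding walk.** If `γ ∈ SAB_n` and `γ_a, γ_b` (`a < b`)
are diamond points, then `γ_{[0,a]} ∘ τ^{e₁} ∘ ρ(γ_{[a,b]}) ∘ τ^{e₁} ∘ γ_{[b,n]}` is a
self-avoiding walk of length `n + 2`. -/
theorem stickbreak_self_avoiding (d : ℕ) (hd : 2 ≤ d) (n : ℕ) (γ : ℕ → V d)
    (hγ : γ ∈ SABset d n) (a b : ℕ) (hab : a < b) (hb : b ≤ n)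
    (hda : IsDiamond n γ a) (hdb : IsDiamond n γ b) :
    stickbreak γ a b ∈ SAWset d (n + 2) := by
  have h0 : 0 < d := by omega
  have h1 : 1 < d := by omega
  obtain ⟨hγ0, ⟨⟨hwalk, hfrozen⟩, hinj⟩, hmin, hmax⟩ := hγ
  obtain ⟨han, hdaf, hdab⟩ := hda
  obtain ⟨hbn, hdbf, hdbb⟩ := hdb
  set w : V d := rotCW (γ a) (γ b) + e1vec d + e1vec d - γ b with hw
  -- piecewise values
  have hval1 : ∀ k, k ≤ a → stickbreak γ a b k = γ k := by
    intro k hk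
    simp only [stickbreak]
    rw [if_pos hk]
  have hval2 : ∀ k, a < k → k ≤ b + 1 →
      stickbreak γ a b k = rotCW (γ a) (γ (k - 1)) + e1vec d := by
    intro k hk1 hk2
    simp only [stickbreak]
    rw [if_neg (by omega), if_pos hk2]
  have hval3 : ∀ k, b + 1 < k → stickbreak γ a b k = γ (k - 2) + w := by
    intro k hk
    simp only [stickbreak]
    rw [if_neg (by omega), if_neg (by omega), hw]
  -- S-coordinate computations
  have hS2 : ∀ j : ℕ,
      xcoord (rotCW (γ a) (γ j) + e1vec d) + ycoord (rotCW (γ a) (γ j) + e1vec d)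
        = 2 * xcoord (γ a) + (ycoord (γ j) - xcoord (γ j)) + 1 := by
    intro j
    rw [xcoord_add', ycoord_add', xcoord_rot hd, ycoord_rot hd, xcoord_e1 h0, ycoord_e1 h1]
    ring
  have hSw : xcoord w + ycoord w =
      2 * xcoord (γ a) + (ycoord (γ b) - xcoord (γ b)) + 2
        - (xcoord (γ b) + ycoord (γ b)) := by
    rw [hw, xcoord_sub', ycoord_sub', xcoord_add', ycoord_add', xcoord_add', ycoord_add',
      xcoord_rot hd, ycoord_rot hd, xcoord_e1 h0, ycoord_e1 h1]
    ring
  -- diamond inequalities used for separation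
  have htcb : ycoord (γ a) - xcoord (γ a) ≤ ycoord (γ b) - xcoord (γ b) :=
    (hdaf b (le_of_lt hab) hb).2
  -- range lemmas
  have hr1 : ∀ k, k ≤ a →
      xcoord (stickbreak γ a b k) + ycoord (stickbreak γ a b k)
        ≤ xcoord (γ a) + ycoord (γ a) := by
    intro k hk
    rw [hval1 k hk]
    exact (hdab k hk).1
  have hr2 : ∀ k, a < k → k ≤ b + 1 →
      xcoord (γ a) + ycoord (γ a) + 1
          ≤ xcoord (stickbreak γ a b k) + ycoord (stickbreak γ a b k) ∧
      xcoord (stickbreak γ a b k) + ycoord (stickbreak γ a b k)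
          ≤ 2 * xcoord (γ a) + (ycoord (γ b) - xcoord (γ b)) + 1 := by
    intro k hk1 hk2
    rw [hval2 k hk1 hk2, hS2 (k - 1)]
    have hlow := (hdaf (k - 1) (by omega) (by omega)).2
    have hhigh := (hdbb (k - 1) (by omega)).2
    constructor <;> linarith
  have hr3 : ∀ k, b + 1 < k → k ≤ n + 2 →
      2 * xcoord (γ a) + (ycoord (γ b) - xcoord (γ b)) + 2
        ≤ xcoord (stickbreak γ a b k) + ycoord (stickbreak γ a b k) := by
    intro k hk1 hk2
    rw [hval3 k hk1, xcoord_add', ycoord_add']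
    have := (hdbf (k - 2) (by omega) (by omega)).1
    linarith [hSw]
  refine ⟨?_, ⟨?_, ?_⟩, ?_⟩
  · -- starts at 0
    rw [hval1 0 (Nat.zero_le a), hγ0]
  · -- adjacency
    intro k hk
    rcases Nat.lt_or_ge k a with hka | hka
    · rw [hval1 k (by omega), hval1 (k + 1) (by omega)]
      exact hwalk k (by omega)
    rcases Nat.eq_or_lt_of_le hka with hka' | hka'
    · -- k = a
      rw [hval1 k (by omega), hval2 (k + 1) (by omega) (by omega)]
      rw [Nat.add_sub_cancel, ← hka', rot_self hd]
      exact adj_e1 h0 (γ a)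
    rcases Nat.lt_or_ge k (b + 1) with hkb | hkb
    · -- a < k < b + 1 : inside rotated part
      rw [hval2 k (by omega) (by omega), hval2 (k + 1) (by omega) (by omega)]
      rw [Nat.add_sub_cancel]
      have h' : (k - 1) + 1 = k := by omega
      have := hwalk (k - 1) (by omega)
      rw [h'] at this
      exact adj_translate (e1vec d) (rot_adj hd (γ a) this)
    rcases Nat.eq_or_lt_of_le hkb with hkb' | hkb'
    · -- k = b + 1
      rw [hval2 k (by omega) (by omega), hval3 (k + 1) (by omega)]
      have e1 : k - 1 = b := by omega
      have e2 : k + 1 - 2 = b := by omega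
      rw [e1, e2, hw]
      have : γ b + (rotCW (γ a) (γ b) + e1vec d + e1vec d - γ b)
          = rotCW (γ a) (γ b) + e1vec d + e1vec d := by abel
      rw [this]
      exact adj_e1 h0 _
    · -- k > b + 1 : final part
      rw [hval3 k (by omega), hval3 (k + 1) (by omega)]
      have e2 : k + 1 - 2 = (k - 2) + 1 := by omega
      rw [e2]
      exact adj_translate w (hwalk (k - 2) (by omega))
  · -- frozen after n + 2
    intro i hi
    rw [hval3 i (by omega), hval3 (n + 2) (by omega)]
    rw [hfrozen (i - 2) (by omega)]
    norm_num
  · -- injectivity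
    intro i hi j hj heq
    have key : ∀ i' j', i' ≤ n + 2 → j' ≤ n + 2 →
        stickbreak γ a b i' = stickbreak γ a b j' → i' ≤ j' → i' = j' := by
      intro i' j' hi' hj' heq' hle
      by_cases hi1 : i' ≤ a
      · by_cases hj1 : j' ≤ a
        · rw [hval1 i' hi1, hval1 j' hj1] at heq'
          exact hinj i' (by omega) j' (by omega) heq'
        · by_cases hj2 : j' ≤ b + 1
          · exfalso
            have A := hr1 i' hi1
            have B := (hr2 j' (by omega) hj2).1
            rw [heq'] at A
            linarith
          · exfalso
            have A := hr1 i' hi1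
            have B := hr3 j' (by omega) hj'
            rw [heq'] at A
            linarith
      · by_cases hi2 : i' ≤ b + 1
        · by_cases hj1 : j' ≤ a
          · omega
          · by_cases hj2 : j' ≤ b + 1
            · rw [hval2 i' (by omega) hi2, hval2 j' (by omega) hj2] at heq'
              have := rot_injective hd (γ a) (add_right_cancel heq')
              have := hinj (i' - 1) (by omega) (j' - 1) (by omega) this
              omega
            · exfalso
              have A := (hr2 i' (by omega) hi2).2
              have B := hr3 j' (by omega) hj'
              rw [heq'] at A
              linarith
        · by_cases hj2 : j' ≤ b + 1
          · omega
          · rw [hval3 i' (by omega), hval3 j' (by omega)] at heq'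
            have := add_right_cancel heq'
            have := hinj (i' - 2) (by omega) (j' - 2) (by omega) this
            omega
    rcases le_or_gt i j with hle | hlt
    · exact key i j hi hj heq hle
    · exact (key j i hj hi heq.symm (le_of_lt hlt)).symm

end SAWpaper
end
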